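/- arXiv:math/0212393 — 3 statements merged into one kernel-verified Lean document; each statement's English description precedes it below -/
import Mathlib

section
/- The function M ↦ log (det M), defined on the set of positive definite symmetric n×n real matrices, is concave: for positive definite A, B and t ∈ [0,1], log det (t•A + (1-t)•B) ≥ t * log det A + (1-t) * log det B. -/
open Matrix Real Finset

/-- `log ∘ det` is concave on positive definite symmetric matrices. -/
theorem stmt_1 {n : ℕ} (A B : Matrix (Fin n) (Fin n) ℝ)
    (hA : A.PosDef) (hB : B.PosDef) (t : ℝ) (ht0 : 0 ≤ t) (ht1 : t ≤ 1) :
    t * Real.log A.det + (1 - t) * Real.log B.det ≤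
      Real.log (t • A + (1 - t) • B).det := by
  classical
  open scoped MatrixOrder in
  set C := CFC.sqrt A with hCdef
  open scoped MatrixOrder in
  have hCps : C.PosSemidef := (CFC.sqrt_nonneg A).posSemidef
  open scoped MatrixOrder in
  have hCC : C * C = A := CFC.sqrt_mul_sqrt_self A hA.posSemidef.nonneg
  have hdetA : 0 < A.det := hA.det_pos
  have hdetB : 0 < B.det := hB.det_pos
  have hdetC : C.det * C.det = A.det := by rw [← det_mul, hCC]
  have hdetC0 : C.det ≠ 0 := by
    intro h; rw [h, zero_mul] at hdetC; exact hdetA.ne' hdetC.symm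
  have hCu : IsUnit C.det := isUnit_iff_ne_zero.mpr hdetC0
  have hCinv : C * C⁻¹ = 1 := mul_nonsing_inv C hCu
  have hCinv' : C⁻¹ * C = 1 := nonsing_inv_mul C hCu
  set M := C⁻¹ * B * C⁻¹ with hMdef
  have hCH : (C⁻¹)ᴴ = C⁻¹ := by rw [conjTranspose_nonsing_inv, hCps.1.eq]
  have hMs : M.PosSemidef := by
    have := hB.posSemidef.mul_mul_conjTranspose_same C⁻¹
    rwa [hCH] at this
  have hdetM : M.det = B.det / A.det := by
    rw [hMdef, det_mul, det_mul, det_nonsing_inv, ← hdetC]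
    field_simp
    rw [← mul_pow, Ring.inverse_mul_cancel _ hCu, one_pow]
  have hMdetpos : 0 < M.det := by rw [hdetM]; exact div_pos hdetB hdetA
  set μ := hMs.1.eigenvalues with hμdef
  have hprodμ : M.det = ∏ i, μ i := by simpa using hMs.1.det_eq_prod_eigenvalues
  have hμpos : ∀ i, 0 < μ i := by
    intro i
    rcases (hMs.eigenvalues_nonneg i).lt_or_eq with h | h
    · exact h
    · exfalso
      have : M.det = 0 := by
        rw [hprodμ]
        exact Finset.prod_eq_zero (Finset.mem_univ i) h.symm
      exact hMdetpos.ne' this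
  have hBM : C * M * C = B := by
    rw [hMdef]
    simp only [Matrix.mul_assoc, hCinv', Matrix.mul_one]
    rw [← Matrix.mul_assoc, hCinv, Matrix.one_mul]
  have hkey : t • A + (1 - t) • B = C * (t • 1 + (1 - t) • M) * C := by
    have h1 : C * (t • 1 + (1 - t) • M) * C
        = t • (C * 1 * C) + (1 - t) • (C * M * C) := by
      simp [mul_add, add_mul, Matrix.mul_smul, Matrix.smul_mul]
    rw [h1, Matrix.mul_one, hCC, hBM]
  -- determinant of the middle factor via spectral theorem
  set U : Matrix (Fin n) (Fin n) ℝ := (hMs.1.eigenvectorUnitary : Matrix (Fin n) (Fin n) ℝ)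
    with hUdef
  have hU1 : star U * U = 1 := UnitaryGroup.star_mul_self _
  have hdiag : star U * M * U = diagonal μ := by
    have := hMs.1.conjStarAlgAut_star_eigenvectorUnitary
    simpa [Unitary.conjStarAlgAut_star_apply, Function.comp_def] using this
  have hNdet : (t • 1 + (1 - t) • M).det = ∏ i, (t + (1 - t) * μ i) := by
    have h2 : star U * (t • 1 + (1 - t) • M) * U
        = diagonal (fun i => t + (1 - t) * μ i) := by
      have : star U * (t • 1 + (1 - t) • M) * U
          = t • (star U * 1 * U) + (1 - t) • (star U * M * U) := by
        simp [mul_add, add_mul, Matrix.mul_smul, Matrix.smul_mul]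
      rw [this, Matrix.mul_one, hU1, hdiag]
      rw [← Matrix.diagonal_one, ← Matrix.diagonal_smul, ← Matrix.diagonal_smul,
        Matrix.diagonal_add]
      funext i
      simp [smul_eq_mul]
    have hdetU : det (star U) * det U = 1 := by rw [← det_mul, hU1, det_one]
    have := congr_arg det h2
    rw [det_mul, det_mul, det_diagonal] at this
    calc (t • 1 + (1 - t) • M).det
        = det (star U) * (t • 1 + (1 - t) • M).det * det U := by
          rw [mul_comm (det (star U)), mul_assoc, hdetU, mul_one]
      _ = ∏ i, (t + (1 - t) * μ i) := this
  have hterm_pos : ∀ i, 0 < t + (1 - t) * μ i := by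
    intro i
    rcases lt_or_ge t 1 with h | h
    · exact add_pos_of_nonneg_of_pos ht0 (mul_pos (by linarith) (hμpos i))
    · have : t = 1 := le_antisymm ht1 h
      simp [this]
  have hdet_main : (t • A + (1 - t) • B).det = A.det * ∏ i, (t + (1 - t) * μ i) := by
    rw [hkey, det_mul, det_mul, hNdet, ← hdetC]
    ring
  have hlog_ineq : ∀ i, (1 - t) * Real.log (μ i) ≤ Real.log (t + (1 - t) * μ i) := by
    intro i
    have hb' : (0:ℝ) ≤ 1 - t := by linarith
    have hc := strictConcaveOn_log_Ioi.concaveOn.2 (Set.mem_Ioi.mpr one_pos)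
      (Set.mem_Ioi.mpr (hμpos i)) ht0 hb' (by ring)
    simpa [smul_eq_mul, Real.log_one] using hc
  have hLHS : Real.log ((t • A + (1 - t) • B).det)
      = Real.log A.det + ∑ i, Real.log (t + (1 - t) * μ i) := by
    rw [hdet_main, Real.log_mul hdetA.ne'
      (Finset.prod_pos fun i _ => hterm_pos i).ne',
      Real.log_prod fun i _ => (hterm_pos i).ne']
  have hsum : ∑ i, Real.log (μ i) = Real.log B.det - Real.log A.det := by
    rw [← Real.log_prod fun i _ => (hμpos i).ne', ← hprodμ, hdetM,
      Real.log_div hdetB.ne' hdetA.ne']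
  calc t * Real.log A.det + (1 - t) * Real.log B.det
      = Real.log A.det + (1 - t) * (Real.log B.det - Real.log A.det) := by ring
    _ = Real.log A.det + (1 - t) * ∑ i, Real.log (μ i) := by rw [hsum]
    _ = Real.log A.det + ∑ i, (1 - t) * Real.log (μ i) := by rw [Finset.mul_sum]
    _ ≤ Real.log A.det + ∑ i, Real.log (t + (1 - t) * μ i) :=
        add_le_add_right (Finset.sum_le_sum fun i _ => hlog_ineq i) _
    _ = Real.log ((t • A + (1 - t) • B).det) := hLHS.symm
end

section
/- The determinant is strictly monotone on positive definite matrices: if A and B are symmetric positive semidefinite n×n real matrices with A positive definite and B ≠ 0, then det (A + B) > det A. -/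
open Matrix

lemma one_lt_det_one_add {n : ℕ} (M : Matrix (Fin n) (Fin n) ℝ)
    (hM : M.PosSemidef) (hM0 : M ≠ 0) : 1 < (1 + M).det := by
  have hH := hM.isHermitian
  have hspec := hH.spectral_theorem
  set U := (hH.eigenvectorUnitary : Matrix (Fin n) (Fin n) ℝ) with hUdef
  have hUunit : U * star U = 1 := (Matrix.mem_unitaryGroup_iff).mp hH.eigenvectorUnitary.2
  set D := Matrix.diagonal (RCLike.ofReal ∘ hH.eigenvalues : Fin n → ℝ) with hDdef
  have h1M : 1 + M = U * (1 + D) * star U := by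
    rw [Matrix.mul_add, Matrix.add_mul, Matrix.mul_one, hUunit, hspec, Unitary.conjStarAlgAut_apply]
  have hUunit' : star U * U = 1 := (Matrix.mem_unitaryGroup_iff').mp hH.eigenvectorUnitary.2
  have hdet : (1 + M).det = (1 + D).det := by
    rw [h1M, Matrix.det_mul, Matrix.det_mul, mul_comm, ← mul_assoc, ← Matrix.det_mul, hUunit']
    simp
  have hdetD : (1 + D).det = ∏ i, (1 + hH.eigenvalues i) := by
    rw [hDdef, ← Matrix.diagonal_one, Matrix.diagonal_add, Matrix.det_diagonal]
    simp [RCLike.ofReal]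
  -- some eigenvalue is positive
  have hne : ∃ i, 0 < hH.eigenvalues i := by
    by_contra h
    push_neg at h
    have hzero : ∀ i, hH.eigenvalues i = 0 := fun i =>
      le_antisymm (h i) (hM.eigenvalues_nonneg i)
    apply hM0
    have : D = 0 := by
      rw [hDdef]
      ext i j
      simp [Matrix.diagonal, hzero]
    rw [hspec, this]
    simp
  obtain ⟨i, hi⟩ := hne
  rw [hdet, hdetD]
  calc (1 : ℝ) = ∏ _j : Fin n, (1 : ℝ) := by simp
    _ < ∏ j, (1 + hH.eigenvalues j) := by
        apply Finset.prod_lt_prod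
        · intro j _; norm_num
        · intro j _
          have := hM.eigenvalues_nonneg j
          linarith
        · exact ⟨i, Finset.mem_univ i, by linarith⟩

/-- Strict monotonicity of the determinant on positive definite matrices. -/
theorem stmt_2 {n : ℕ} (A B : Matrix (Fin n) (Fin n) ℝ)
    (hA : A.PosDef) (hB : B.PosSemidef) (hB0 : B ≠ 0) :
    A.det < (A + B).det := by
  set S := (open scoped MatrixOrder in CFC.sqrt A) with hSdef
  have hSS : S * S = A := by open scoped MatrixOrder in exact CFC.sqrt_mul_sqrt_self A hA.posSemidef.nonneg
  have hSH : S.IsHermitian := by open scoped MatrixOrder in exact (CFC.sqrt_nonneg A).posSemidef.isHermitian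
  have hdetA : 0 < A.det := hA.det_pos
  have hdetS : S.det ≠ 0 := by
    intro h
    rw [← hSS, Matrix.det_mul, h, mul_zero] at hdetA
    exact lt_irrefl 0 hdetA
  have hSinv : S * S⁻¹ = 1 := Matrix.mul_nonsing_inv S (isUnit_iff_ne_zero.mpr hdetS)
  have hSinv' : S⁻¹ * S = 1 := Matrix.nonsing_inv_mul S (isUnit_iff_ne_zero.mpr hdetS)
  set M := S⁻¹ * B * S⁻¹ with hMdef
  have hMpsd : M.PosSemidef := by
    have h1 : (S⁻¹)ᴴ = S⁻¹ := by
      rw [Matrix.conjTranspose_nonsing_inv, hSH.eq]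
    have := hB.conjTranspose_mul_mul_same (S⁻¹)
    rwa [h1] at this
  have hmid : S * M * S = B := by
    rw [hMdef]
    simp only [← Matrix.mul_assoc]
    rw [hSinv, Matrix.one_mul, Matrix.mul_assoc, hSinv', Matrix.mul_one]
  have hM0 : M ≠ 0 := by
    intro h
    apply hB0
    rw [← hmid, h, Matrix.mul_zero, Matrix.zero_mul]
  have hAB : A + B = S * (1 + M) * S := by
    rw [Matrix.mul_add, Matrix.mul_one, Matrix.add_mul, hSS, hmid]
  have key := one_lt_det_one_add M hMpsd hM0
  calc A.det = A.det * 1 := (mul_one _).symm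
    _ < A.det * (1 + M).det := by exact (mul_lt_mul_iff_right₀ hdetA).mpr key
    _ = (A + B).det := by
        rw [hAB, Matrix.det_mul, Matrix.det_mul, ← hSS, Matrix.det_mul]
        ring
end

section
/- Each elementary symmetric polynomial of the eigenvalues, C_k(M) = e_k(λ₁(M),…,λₙ(M)), is strictly monotone on positive definite matrices: if A is symmetric positive definite and B symmetric positive semidefinite nonzero, then e_k of the eigenvalues of A+B is strictly greater than e_k of the eigenvalues of A, for 1 ≤ k ≤ n. -/
/-- The `k`-th elementary symmetric polynomial of `f : Fin n → ℝ`. -/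
def esymm {n : ℕ} (k : ℕ) (f : Fin n → ℝ) : ℝ :=
  ∑ s ∈ Finset.univ.powersetCard k, ∏ i ∈ s, f i

open Matrix Finset

variable {n : ℕ}

lemma det_piecewise_diagonal (M : Matrix (Fin n) (Fin n) ℝ) (d : Fin n → ℝ)
    (s : Finset (Fin n)) :
    Matrix.det (Matrix.of (s.piecewise M (Matrix.diagonal d))) =
      (∏ i ∈ sᶜ, d i) *
        Matrix.det (M.submatrix (Subtype.val : {i // i ∈ s} → Fin n) Subtype.val) := by
  classical
  set N : Matrix (Fin n) (Fin n) ℝ := Matrix.of (s.piecewise M (Matrix.diagonal d)) with hN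
  let e : {i // i ∈ s} ⊕ {i // ¬ i ∈ s} ≃ Fin n := Equiv.sumCompl (· ∈ s)
  have h1 : N.submatrix e e =
      Matrix.fromBlocks (M.submatrix Subtype.val Subtype.val)
        (M.submatrix Subtype.val Subtype.val) 0
        (Matrix.diagonal fun i : {i // ¬ i ∈ s} => d i.val) := by
    ext i j
    rcases i with i | i <;> rcases j with j | j <;>
        simp [N, e, Finset.piecewise, i.2, j.2, Matrix.diagonal, Matrix.fromBlocks,
          Subtype.ext_iff]
    exact fun h => absurd (h ▸ j.2) i.2
  have h2 := Matrix.det_submatrix_equiv_self e N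
  rw [← h2, h1, Matrix.det_fromBlocks_zero₂₁, Matrix.det_diagonal, mul_comm]
  congr 1
  rw [← Finset.prod_subtype sᶜ (fun i => Finset.mem_compl) d]

lemma det_diagonal_add (M : Matrix (Fin n) (Fin n) ℝ) (d : Fin n → ℝ) :
    (Matrix.diagonal d + M).det =
      ∑ s ∈ (Finset.univ : Finset (Fin n)).powerset, (∏ i ∈ sᶜ, d i) *
        Matrix.det (M.submatrix (Subtype.val : {i // i ∈ s} → Fin n) Subtype.val) := by
  classical
  have h := (Matrix.detRowAlternating :
      AlternatingMap ℝ (Fin n → ℝ) ℝ (Fin n)).toMultilinearMap.map_add_univ M (Matrix.diagonal d)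
  calc (Matrix.diagonal d + M).det
      = (Matrix.detRowAlternating :
        AlternatingMap ℝ (Fin n → ℝ) ℝ (Fin n)).toMultilinearMap (M + Matrix.diagonal d) := by
        rw [add_comm]; rfl
    _ = ∑ s : Finset (Fin n), (Matrix.detRowAlternating :
        AlternatingMap ℝ (Fin n → ℝ) ℝ (Fin n)).toMultilinearMap
          (s.piecewise M (Matrix.diagonal d)) := h
    _ = ∑ s ∈ (Finset.univ : Finset (Fin n)).powerset, (∏ i ∈ sᶜ, d i) *
        Matrix.det (M.submatrix (Subtype.val : {i // i ∈ s} → Fin n) Subtype.val) := by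
        rw [Finset.powerset_univ]
        exact Finset.sum_congr rfl fun s _ => det_piecewise_diagonal M d s

lemma det_diagonal_const_add {m : Type*} [Fintype m] [DecidableEq m] {M : Matrix m m ℝ} (hM : M.IsHermitian) (t : ℝ) :
    (Matrix.diagonal (fun _ => t) + M).det = ∏ i, (t + hM.eigenvalues i) := by
  classical
  set U : Matrix m m ℝ := (hM.eigenvectorUnitary : Matrix m m ℝ) with hUdef
  have hU1 : U * star U = 1 := (Matrix.mem_unitaryGroup_iff).mp hM.eigenvectorUnitary.2
  have hev : (RCLike.ofReal ∘ hM.eigenvalues : m → ℝ) = hM.eigenvalues := by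
    ext i; simp
  have key : Matrix.diagonal (fun _ : m => t) + M
      = U * Matrix.diagonal (fun i => t + hM.eigenvalues i) * star U := by
    have hsp := hM.spectral_theorem
    rw [hev] at hsp
    rw [Unitary.conjStarAlgAut_apply] at hsp
    have hdiag : Matrix.diagonal (fun i : m => t + hM.eigenvalues i)
        = Matrix.diagonal (fun _ : m => t) + Matrix.diagonal hM.eigenvalues := by
      rw [← Matrix.diagonal_add]
    have hconst : Matrix.diagonal (fun _ : m => t) = t • (1 : Matrix m m ℝ) := by
      ext i j; simp [Matrix.diagonal, Matrix.one_apply, mul_ite]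
    rw [hdiag, Matrix.mul_add, Matrix.add_mul, ← hsp, hconst]
    rw [Matrix.mul_smul, Matrix.mul_one, Matrix.smul_mul, hU1]
  have hU2 : star U * U = 1 := (Matrix.mem_unitaryGroup_iff').mp hM.eigenvectorUnitary.2
  rw [key, Matrix.det_mul, Matrix.det_mul, mul_comm, ← mul_assoc, ← Matrix.det_mul, hU2,
    Matrix.det_one, one_mul, Matrix.det_diagonal]

lemma esymm_eq_sum_minors {k : ℕ} (hk : k ≤ n) {M : Matrix (Fin n) (Fin n) ℝ}
    (hM : M.IsHermitian) :
    esymm k hM.eigenvalues = ∑ s ∈ (Finset.univ : Finset (Fin n)).powersetCard k,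
      Matrix.det (M.submatrix (Subtype.val : {i // i ∈ s} → Fin n) Subtype.val) := by
  classical
  set P : Polynomial ℝ := ∑ s ∈ (Finset.univ : Finset (Fin n)).powerset,
    Polynomial.C (Matrix.det (M.submatrix (Subtype.val : {i // i ∈ s} → Fin n) Subtype.val))
      * Polynomial.X ^ (sᶜ.card) with hP
  set Q : Polynomial ℝ := ∑ s ∈ (Finset.univ : Finset (Fin n)).powerset,
    Polynomial.C (∏ i ∈ sᶜ, hM.eigenvalues i) * Polynomial.X ^ (s.card) with hQ
  have hPQ : P = Q := by
    apply Polynomial.funext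
    intro t
    rw [hP, hQ, Polynomial.eval_finset_sum, Polynomial.eval_finset_sum]
    have h1 : ∑ s ∈ (Finset.univ : Finset (Fin n)).powerset,
        ((Polynomial.C (Matrix.det (M.submatrix (Subtype.val : {i // i ∈ s} → Fin n) Subtype.val))
        * Polynomial.X ^ (sᶜ.card)).eval t) = (Matrix.diagonal (fun _ : Fin n => t) + M).det := by
      rw [det_diagonal_add M (fun _ => t)]
      refine Finset.sum_congr rfl fun s _ => ?_
      simp only [Polynomial.eval_mul, Polynomial.eval_C, Polynomial.eval_pow, Polynomial.eval_X,
        Finset.prod_const]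
      ring
    have h2 : ∑ s ∈ (Finset.univ : Finset (Fin n)).powerset,
        ((Polynomial.C (∏ i ∈ sᶜ, hM.eigenvalues i) * Polynomial.X ^ (s.card)).eval t)
        = (Matrix.diagonal (fun _ : Fin n => t) + M).det := by
      rw [det_diagonal_const_add hM t]
      simp only [Polynomial.eval_mul, Polynomial.eval_C, Polynomial.eval_pow, Polynomial.eval_X]
      rw [Finset.prod_add]
      refine Finset.sum_congr rfl fun s _ => ?_
      rw [Finset.prod_const, Finset.compl_eq_univ_sdiff]
      ring
    rw [h1, h2]
  have hfilt : ∀ m : ℕ, ((Finset.univ : Finset (Fin n)).powerset.filter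
      (fun s => n - m = n - s.card)) = (Finset.univ : Finset (Fin n)).powersetCard m
      → True := fun _ _ => trivial
  have hPc : P.coeff (n - k) = ∑ s ∈ (Finset.univ : Finset (Fin n)).powersetCard k,
      Matrix.det (M.submatrix (Subtype.val : {i // i ∈ s} → Fin n) Subtype.val) := by
    rw [hP, Polynomial.finset_sum_coeff]
    simp only [Polynomial.coeff_C_mul, Polynomial.coeff_X_pow, mul_ite, mul_one, mul_zero]
    rw [← Finset.sum_filter]
    apply Finset.sum_congr _ (fun s _ => rfl)
    ext u
    simp only [Finset.mem_filter, Finset.mem_powerset, Finset.mem_powersetCard,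
      Finset.card_compl, Fintype.card_fin]
    have hu : u.card ≤ n := by
      simpa using Finset.card_le_univ u
    constructor
    · rintro ⟨h1, h2⟩; exact ⟨h1, by omega⟩
    · rintro ⟨h1, h2⟩; exact ⟨h1, by omega⟩
  have hQc : Q.coeff (n - k) = esymm k hM.eigenvalues := by
    rw [hQ, Polynomial.finset_sum_coeff]
    simp only [Polynomial.coeff_C_mul, Polynomial.coeff_X_pow, mul_ite, mul_one, mul_zero]
    rw [← Finset.sum_filter]
    rw [esymm]
    refine Finset.sum_nbij' (fun s => sᶜ) (fun s => sᶜ) ?_ ?_ ?_ ?_ ?_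
    · intro s hs
      simp only [Finset.mem_filter, Finset.mem_powerset] at hs
      have hsc : s.card ≤ n := by simpa using Finset.card_le_univ s
      simp only [Finset.mem_powersetCard, Finset.card_compl, Fintype.card_fin]
      exact ⟨Finset.subset_univ _, by omega⟩
    · intro s hs
      simp only [Finset.mem_powersetCard, Fintype.card_fin] at hs
      simp only [Finset.mem_filter, Finset.mem_powerset, Finset.card_compl, Fintype.card_fin]
      exact ⟨Finset.subset_univ _, by omega⟩
    · intro s _; exact compl_compl s
    · intro s _; exact compl_compl s
    · intro s _; rfl
  calc esymm k hM.eigenvalues = Q.coeff (n - k) := hQc.symm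
    _ = P.coeff (n - k) := by rw [hPQ]
    _ = _ := hPc

lemma posDef_submatrix_val {M : Matrix (Fin n) (Fin n) ℝ} (hM : M.PosDef) (s : Finset (Fin n)) :
    (M.submatrix (Subtype.val : {i // i ∈ s} → Fin n) Subtype.val).PosDef := by
  classical
  refine Matrix.PosDef.of_dotProduct_mulVec_pos (hM.posSemidef.submatrix _).1 fun x hx => ?_
  set y : Fin n → ℝ := fun i => if h : i ∈ s then x ⟨i, h⟩ else 0 with hy
  have hy0 : y ≠ 0 := by
    intro h
    apply hx
    ext j
    have := congrFun h j.val
    simpa [hy, j.2] using this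
  have hkey : dotProduct (star x)
      ((M.submatrix (Subtype.val : {i // i ∈ s} → Fin n) Subtype.val) *ᵥ x)
      = dotProduct (star y) (M *ᵥ y) := by
    simp only [dotProduct, Matrix.mulVec, star_trivial, Matrix.submatrix_apply]
    symm
    rw [← Finset.sum_subset (Finset.subset_univ s) (fun i _ hi => by simp [hy, hi])]
    rw [← Finset.sum_coe_sort s (fun i => y i * ∑ j, M i j * y j)]
    refine Finset.sum_congr rfl fun i _ => ?_
    have hinner : (∑ j, M i.val j * y j) = ∑ j : {j // j ∈ s}, M i.val j.val * x j := by
      rw [← Finset.sum_subset (Finset.subset_univ s) (fun j _ hj => by simp [hy, hj])]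
      rw [← Finset.sum_coe_sort s (fun j => M i.val j * y j)]
      exact Finset.sum_congr rfl fun j _ => by simp [hy, j.2]
    rw [hinner]
    simp [hy, i.2]
  rw [hkey]
  exact hM.dotProduct_mulVec_pos hy0

lemma posSemidef_trace_pos {m : Type*} [Fintype m] [DecidableEq m] {C : Matrix m m ℝ} (hC : C.PosSemidef) (h0 : C ≠ 0) :
    ∃ i, 0 < hC.1.eigenvalues i := by
  classical
  by_contra h
  push_neg at h
  have hz : ∀ i, hC.1.eigenvalues i = 0 := fun i => le_antisymm (h i) (hC.eigenvalues_nonneg i)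
  apply h0
  have hsp := hC.1.spectral_theorem
  have : (RCLike.ofReal ∘ hC.1.eigenvalues : m → ℝ) = (fun _ => 0) := by ext i; simp [hz]
  rw [this] at hsp
  simpa using hsp

lemma det_add_posSemidef {m : Type*} [Fintype m] [DecidableEq m] {A B : Matrix m m ℝ} (hA : A.PosDef) (hB : B.PosSemidef) :
    A.det ≤ (A + B).det ∧ (B ≠ 0 → A.det < (A + B).det) := by
  classical
  set ev := hA.1.eigenvalues with hevdef
  have hev : ∀ i, 0 < ev i := hA.eigenvalues_pos
  set U : Matrix m m ℝ := (hA.1.eigenvectorUnitary : Matrix m m ℝ)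
    with hUdef
  have hU1 : U * star U = 1 := (Matrix.mem_unitaryGroup_iff).mp hA.1.eigenvectorUnitary.2
  have hU2 : star U * U = 1 := (Matrix.mem_unitaryGroup_iff').mp hA.1.eigenvectorUnitary.2
  have hsp : A = U * Matrix.diagonal ev * star U := by
    have h := hA.1.spectral_theorem
    have hco : (RCLike.ofReal ∘ hA.1.eigenvalues : m → ℝ) = ev := by ext i; simp [hevdef]
    rwa [hco] at h
  set E : Matrix m m ℝ := Matrix.diagonal (fun i => Real.sqrt (ev i)) with hE
  set F : Matrix m m ℝ := Matrix.diagonal (fun i => (Real.sqrt (ev i))⁻¹) with hF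
  have hsqrt_ne : ∀ i, Real.sqrt (ev i) ≠ 0 := fun i =>
    ne_of_gt (Real.sqrt_pos.mpr (hev i))
  have hEF : E * F = 1 := by
    rw [hE, hF, Matrix.diagonal_mul_diagonal]
    convert Matrix.diagonal_one
    exact mul_inv_cancel₀ (hsqrt_ne _)
  have hFE : F * E = 1 := by
    rw [hE, hF, Matrix.diagonal_mul_diagonal]
    convert Matrix.diagonal_one
    exact inv_mul_cancel₀ (hsqrt_ne _)
  have hEE : E * E = Matrix.diagonal ev := by
    rw [hE, Matrix.diagonal_mul_diagonal]
    exact congrArg Matrix.diagonal (funext fun i => Real.mul_self_sqrt (hev i).le)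
  have hEsymm : star E = E := by
    rw [hE, Matrix.star_eq_conjTranspose, Matrix.diagonal_conjTranspose]
    congr 1
  have hFsymm : star F = F := by
    rw [hF, Matrix.star_eq_conjTranspose, Matrix.diagonal_conjTranspose]
    congr 1
  set B' : Matrix m m ℝ := star U * B * U with hB'def
  have hB' : B'.PosSemidef := by
    have := hB.conjTranspose_mul_mul_same (B := U)
    rwa [← Matrix.star_eq_conjTranspose] at this
  set C : Matrix m m ℝ := F * B' * F with hCdef
  have hC : C.PosSemidef := by
    have := hB'.conjTranspose_mul_mul_same (B := F)
    rwa [← Matrix.star_eq_conjTranspose, hFsymm] at this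
  have hECE : E * C * E = B' := by
    rw [hCdef]
    calc E * (F * B' * F) * E = (E * F) * B' * (F * E) := by
          simp only [Matrix.mul_assoc]
      _ = B' := by rw [hEF, hFE, Matrix.one_mul, Matrix.mul_one]
  have hBB' : B = U * B' * star U := by
    rw [hB'def]
    calc B = (U * star U) * B * (U * star U) := by rw [hU1, Matrix.one_mul, Matrix.mul_one]
      _ = U * (star U * B * U) * star U := by simp only [Matrix.mul_assoc]
  have key : A + B = U * (E * (1 + C) * E) * star U := by
    have h1 : E * (1 + C) * E = Matrix.diagonal ev + B' := by
      rw [Matrix.mul_add, Matrix.mul_one, Matrix.add_mul, hEE, hECE]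
    rw [h1, Matrix.mul_add, Matrix.add_mul, ← hsp, ← hBB']
  have hdet1C : (1 + C).det = ∏ i, (1 + hC.1.eigenvalues i) := by
    rw [← det_diagonal_const_add hC.1 1]
    congr
  have hdetU : U.det * (star U).det = 1 := by rw [← Matrix.det_mul, hU1, Matrix.det_one]
  have hdetE : E.det * E.det = A.det := by
    rw [hE, Matrix.det_diagonal, hA.1.det_eq_prod_eigenvalues, ← Finset.prod_mul_distrib]
    refine Finset.prod_congr rfl fun i _ => ?_
    simp [Real.mul_self_sqrt (le_of_lt (hev i)), hevdef]
    exact Real.mul_self_sqrt (le_of_lt (hA.eigenvalues_pos i))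
  have hdetAB : (A + B).det = A.det * (1 + C).det := by
    rw [key]
    simp only [Matrix.det_mul]
    rw [← hdetE]
    linear_combination (E.det * E.det * (1 + C).det) * hdetU
  have hone_le : 1 ≤ (1 + C).det := by
    rw [hdet1C]
    calc (1:ℝ) = ∏ _i : m, 1 := by rw [Finset.prod_const_one]
      _ ≤ ∏ i, (1 + hC.1.eigenvalues i) := by
          apply Finset.prod_le_prod (fun _ _ => zero_le_one)
          intro i _
          linarith [hC.eigenvalues_nonneg i]
  constructor
  · rw [hdetAB]
    exact le_mul_of_one_le_right (le_of_lt hA.det_pos) hone_le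
  · intro hB0
    have hC0 : C ≠ 0 := by
      intro h
      apply hB0
      rw [hBB', ← hECE, h]
      simp
    obtain ⟨i, hi⟩ := posSemidef_trace_pos hC hC0
    have hone_lt : 1 < (1 + C).det := by
      rw [hdet1C]
      calc (1:ℝ) = ∏ _i : m, 1 := by rw [Finset.prod_const_one]
        _ < ∏ i, (1 + hC.1.eigenvalues i) := by
            apply Finset.prod_lt_prod (fun _ _ => zero_lt_one)
              (fun j _ => by linarith [hC.eigenvalues_nonneg j])
            exact ⟨i, Finset.mem_univ i, by linarith⟩
    rw [hdetAB]
    exact lt_mul_of_one_lt_right hA.det_pos hone_lt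

lemma exists_diag_pos {B : Matrix (Fin n) (Fin n) ℝ} (hB : B.PosSemidef) (hB0 : B ≠ 0) :
    ∃ i, 0 < B i i := by
  classical
  obtain ⟨i, hi⟩ := posSemidef_trace_pos hB hB0
  have htr : B.trace = ∑ j, hB.1.eigenvalues j := by
    have hsp := hB.1.spectral_theorem
    have hco : (RCLike.ofReal ∘ hB.1.eigenvalues : Fin n → ℝ) = hB.1.eigenvalues := by
      ext j; simp
    rw [hco] at hsp
    rw [Unitary.conjStarAlgAut_apply] at hsp
    conv_lhs => rw [hsp]
    rw [Matrix.trace_mul_comm, ← Matrix.mul_assoc,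
      (Matrix.mem_unitaryGroup_iff').mp hB.1.eigenvectorUnitary.2, Matrix.one_mul,
      Matrix.trace_diagonal]
  have hpos : 0 < B.trace := by
    rw [htr]
    exact Finset.sum_pos' (fun j _ => hB.eigenvalues_nonneg j) ⟨i, Finset.mem_univ i, hi⟩
  have : (0:ℝ) = ∑ _j : Fin n, 0 := by simp
  have h2 : ∑ _j : Fin n, (0:ℝ) < ∑ j, B j j := by
    rw [← this]; exact hpos
  obtain ⟨j, _, hj⟩ := Finset.exists_lt_of_sum_lt h2
  exact ⟨j, hj⟩


/-- The elementary symmetric functions of the eigenvalues are strictly monotone on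
positive definite matrices. -/
theorem stmt_14 {n : ℕ} (k : ℕ) (hk1 : 1 ≤ k) (hkn : k ≤ n)
    (A B : Matrix (Fin n) (Fin n) ℝ)
    (hA : A.PosDef) (hB : B.PosSemidef) (hB0 : B ≠ 0) :
    esymm k hA.1.eigenvalues < esymm k (hA.1.add hB.1).eigenvalues := by
  classical
  rw [esymm_eq_sum_minors hkn hA.1, esymm_eq_sum_minors hkn (hA.1.add hB.1)]
  obtain ⟨i0, hi0⟩ := exists_diag_pos hB hB0
  obtain ⟨s0, hs0sub, _, hs0card⟩ := Finset.exists_subsuperset_card_eq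
    (Finset.subset_univ {i0}) (by simpa using hk1) (by simpa using hkn)
  have hs0mem : s0 ∈ (Finset.univ : Finset (Fin n)).powersetCard k :=
    Finset.mem_powersetCard.mpr ⟨Finset.subset_univ _, hs0card⟩
  have hi0s0 : i0 ∈ s0 := hs0sub (Finset.mem_singleton_self i0)
  apply Finset.sum_lt_sum
  · intro s _
    have h := (det_add_posSemidef (A := A.submatrix (Subtype.val : {i // i ∈ s} → Fin n)
      Subtype.val) (posDef_submatrix_val hA s)
      (hB.submatrix (Subtype.val : {i // i ∈ s} → Fin n))).1
    exact h
  · refine ⟨s0, hs0mem, ?_⟩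
    have hBs0 : B.submatrix (Subtype.val : {i // i ∈ s0} → Fin n)
        (Subtype.val : {i // i ∈ s0} → Fin n) ≠ 0 := by
      intro h
      have := congrFun (congrFun h ⟨i0, hi0s0⟩) ⟨i0, hi0s0⟩
      simp only [Matrix.submatrix_apply, Matrix.zero_apply] at this
      exact absurd this (ne_of_gt hi0)
    have h := (det_add_posSemidef (A := A.submatrix (Subtype.val : {i // i ∈ s0} → Fin n)
      Subtype.val) (posDef_submatrix_val hA s0)
      (hB.submatrix (Subtype.val : {i // i ∈ s0} → Fin n))).2 hBs0
    exact h
end
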